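/- The differential operator D_k defined by D_k f = V^{-1} (Σ_{j=1}^N (u_j ∂/∂u_j)^k)(V·f), where V = ∏_{i<j}(u_i − u_j) is the Vandermonde determinant, has the Schur polynomials as eigenfunctions: D_k s_λ(u_1,…,u_N) = (Σ_{i=1}^N (λ_i + N − i)^k) · s_λ(u_1,…,u_N). -/

import Mathlib

open scoped BigOperators
open MvPolynomial

/-- The complete homogeneous symmetric polynomial `h_r` in `N` variables. -/
noncomputable def hsymP (N : ℕ) (r : ℕ) : MvPolynomial (Fin N) ℂ :=
  ∑ m : Fin N → Fin (r + 1),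
    if (∑ i, (m i : ℕ)) = r then ∏ i, (X i) ^ (m i : ℕ) else 0

/-- `h_k` for an integer index `k`, equal to `0` for negative `k`. -/
noncomputable def hsymPZ (N : ℕ) (z : ℤ) : MvPolynomial (Fin N) ℂ :=
  if z < 0 then 0 else hsymP N z.toNat

/-- The Schur polynomial `s_λ` in `N` variables via the Jacobi–Trudi formula. -/
noncomputable def schurP (N : ℕ) (lam : Fin N → ℕ) : MvPolynomial (Fin N) ℂ :=
  Matrix.det (Matrix.of fun i j : Fin N =>
    hsymPZ N ((lam i : ℤ) + (j : ℤ) - (i : ℤ)))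

/-- The Vandermonde polynomial `V = ∏_{i<j} (u_i − u_j)`. -/
noncomputable def vandP (N : ℕ) : MvPolynomial (Fin N) ℂ :=
  ∏ p ∈ Finset.univ.filter (fun p : Fin N × Fin N => p.1 < p.2), (X p.1 - X p.2)

/-- The Euler operator `u_j ∂/∂u_j` on polynomials. -/
noncomputable def eulerOp (N : ℕ) (j : Fin N) (f : MvPolynomial (Fin N) ℂ) :
    MvPolynomial (Fin N) ℂ :=
  X j * pderiv j f

/-!
The Euler operators act diagonally on monomials, `u_j ∂_j u^d = d_j u^d`, so `Σ_j (u_j ∂_j)^k`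
multiplies every term `± u^{μ ∘ τ⁻¹}` of the alternant `a_μ = det (u_i ^ μ_j)` by the same power
sum `Σ_i μ_i ^ k`. It remains to prove the bialternant formula `V · s_λ = a_{λ+δ}`,
`δ = (N-1, …, 1, 0)`. Comparing coefficients in
`∏_{j ≠ i} (1 - u_j t) · ∏_j (1 - u_j t)⁻¹ = (1 - u_i t)⁻¹`
factors `(u_i ^ μ_j)` as `E · (h_{μ_j - k})` with `E` independent of `μ`. For `μ = λ + δ` the
second factor is the transposed Jacobi–Trudi matrix with its rows reversed, so
`a_{λ+δ} = det E · sign(rev) · s_λ`; since `s_0 = 1` this is `a_δ · s_λ`, and `a_δ = V`.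
-/

open Finset

namespace MvPolynomial

variable {σ R : Type*}

section Euler

variable [CommSemiring R]

noncomputable def euler (j : σ) : Module.End R (MvPolynomial σ R) :=
  LinearMap.mulLeft R (X j) ∘ₗ (pderiv j).toLinearMap

theorem euler_apply (j : σ) (p : MvPolynomial σ R) : euler j p = X j * pderiv j p := rfl

theorem euler_pow_monomial (j : σ) (k : ℕ) (d : σ →₀ ℕ) (a : R) :
    (euler j ^ k) (monomial d a) = ((d j : R) ^ k) • monomial d a := by
  induction k with
  | zero => simp
  | succ k ih =>
    rw [pow_succ', Module.End.mul_apply, ih, map_smul, euler_apply, X_mul_pderiv_monomial,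
      ← Nat.cast_smul_eq_nsmul R, smul_smul, pow_succ]

end Euler

variable [CommRing R] [Fintype σ]

theorem monomial_mem_eigenspace (k : ℕ) (d : σ →₀ ℕ) (a : R) :
    monomial d a ∈ (∑ j, euler j ^ k).eigenspace (∑ j, (d j : R) ^ k) := by
  rw [Module.End.mem_eigenspace_iff, LinearMap.sum_apply, Finset.sum_smul]
  exact Finset.sum_congr rfl fun j _ => euler_pow_monomial j k d a

theorem prod_X_pow_mem_eigenspace (k : ℕ) (ν : σ → ℕ) :
    ∏ j, (X j : MvPolynomial σ R) ^ ν j ∈ (∑ j, euler j ^ k).eigenspace (∑ j, (ν j : R) ^ k) := by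
  have h := monomial_mem_eigenspace (R := R) k (Finsupp.equivFunOnFinite.symm ν) 1
  rwa [monomial_eq, C_1, one_mul, Finsupp.prod_fintype _ _ (fun _ => pow_zero _)] at h

variable [DecidableEq σ]

noncomputable def alternant (μ : σ → ℕ) : MvPolynomial σ R :=
  (Matrix.of fun i j => (X i : MvPolynomial σ R) ^ μ j).det

theorem alternant_mem_eigenspace (k : ℕ) (μ : σ → ℕ) :
    alternant μ ∈ (∑ j, euler j ^ k).eigenspace (∑ i, (μ i : R) ^ k) := by
  rw [alternant, Matrix.det_apply]
  refine Submodule.sum_mem _ fun τ _ => ?_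
  rw [Units.smul_def]
  refine zsmul_mem ?_ _
  have h := prod_X_pow_mem_eigenspace (R := R) k (μ ∘ τ.symm)
  simp only [Function.comp_apply] at h
  rw [Equiv.sum_comp τ.symm (fun i => (μ i : R) ^ k), ← Equiv.prod_comp τ] at h
  simpa using h

end MvPolynomial

section GeneratingFunctions

variable {ι A : Type*} [CommRing A]

theorem PowerSeries.mk_pow_mul_one_sub_C_mul_X (a : A) :
    PowerSeries.mk (a ^ ·) * (1 - PowerSeries.C a * PowerSeries.X) = 1 := by
  simpa [PowerSeries.rescale_mk, PowerSeries.rescale_X] using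
    congrArg (PowerSeries.rescale a) (PowerSeries.mk_one_mul_one_sub_eq_one A)

variable [Fintype ι] [DecidableEq ι]

noncomputable def hSeries (x : ι → A) : PowerSeries A := ∏ i, PowerSeries.mk (x i ^ ·)

/-- `∏_{j ≠ i} (1 - x_j t)`: its coefficients are the signed elementary symmetric polynomials of
the `x_j`, `j ≠ i`, but only its degree bound is needed. -/
noncomputable def ePolyExcept (x : ι → A) (i : ι) : Polynomial A :=
  ∏ j ∈ univ.erase i, (1 - Polynomial.C (x j) * Polynomial.X)

theorem coeff_hSeries (x : ι → A) (r : ℕ) :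
    PowerSeries.coeff r (hSeries x) = ∑ l ∈ finsuppAntidiag univ r, ∏ i, x i ^ l i := by
  simp [hSeries, PowerSeries.coeff_prod]

theorem natDegree_ePolyExcept_lt (x : ι → A) (i : ι) :
    (ePolyExcept x i).natDegree < Fintype.card ι := by
  calc (ePolyExcept x i).natDegree
      = (∏ j ∈ univ.erase i, (1 - Polynomial.C (x j) * Polynomial.X)).natDegree := rfl
    _ ≤ ∑ j ∈ univ.erase i, (1 - Polynomial.C (x j) * Polynomial.X).natDegree :=
        Polynomial.natDegree_prod_le _ _
    _ ≤ ∑ j ∈ univ.erase i, 1 := by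
        gcongr with j
        compute_degree
    _ < Fintype.card ι := by
        simpa [Finset.card_erase_of_mem] using Fintype.card_pos_iff.mpr ⟨i⟩

theorem ePolyExcept_mul_hSeries (x : ι → A) (i : ι) :
    (ePolyExcept x i : PowerSeries A) * hSeries x = PowerSeries.mk (x i ^ ·) := by
  rw [hSeries, ← mul_prod_erase univ _ (mem_univ i), mul_left_comm, ePolyExcept,
    ← Polynomial.coeToPowerSeries.ringHom_apply, map_prod, ← prod_mul_distrib]
  simp only [map_sub, map_mul, map_one, Polynomial.coeToPowerSeries.ringHom_apply,
    Polynomial.coe_C, Polynomial.coe_X]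
  rw [prod_congr rfl fun j _ => mul_comm _ _,
    prod_congr rfl fun j _ => PowerSeries.mk_pow_mul_one_sub_C_mul_X (x j), prod_const_one, mul_one]

end GeneratingFunctions

section Bialternant

variable {N : ℕ}

theorem hsymP_eq_coeff_hSeries (r : ℕ) :
    hsymP N r = PowerSeries.coeff r (hSeries (X : Fin N → MvPolynomial (Fin N) ℂ)) := by
  rw [coeff_hSeries, hsymP, ← sum_filter]
  refine sum_bij' (fun m _ => Finsupp.equivFunOnFinite.symm fun i => (m i : ℕ))
    (fun l hl i => ⟨l i, Nat.lt_succ_of_le ?_⟩) ?_ ?_ ?_ ?_ ?_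
  · rw [mem_finsuppAntidiag] at hl
    exact hl.1 ▸ single_le_sum (fun _ _ => Nat.zero_le _) (mem_univ i)
  · exact fun m hm => by simpa [mem_finsuppAntidiag] using hm
  · exact fun l hl => by simpa [mem_finsuppAntidiag] using hl
  · exact fun m _ => rfl
  · exact fun l _ => Finsupp.ext fun i => rfl
  · exact fun m _ => rfl

theorem hsymPZ_zero : hsymPZ N 0 = 1 := by
  simp [hsymPZ, hsymP_eq_coeff_hSeries, hSeries]

theorem X_pow_eq_sum_coeff_mul_hsymPZ (i : Fin N) (m : ℕ) :
    (X i : MvPolynomial (Fin N) ℂ) ^ m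
      = ∑ k : Fin N, (ePolyExcept X i).coeff k * hsymPZ N ((m : ℤ) - k) := by
  set g : ℕ → MvPolynomial (Fin N) ℂ := fun k =>
    (ePolyExcept (X : Fin N → MvPolynomial (Fin N) ℂ) i).coeff k * hsymPZ N ((m : ℤ) - k)
  have hcoeff := congrArg (PowerSeries.coeff m)
    (ePolyExcept_mul_hSeries (X : Fin N → MvPolynomial (Fin N) ℂ) i)
  rw [PowerSeries.coeff_mk, PowerSeries.coeff_mul,
    Nat.sum_antidiagonal_eq_sum_range_succ_mk] at hcoeff
  have hm : ∑ k ∈ range (m + 1), g k = X i ^ m := by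
    rw [← hcoeff]
    refine sum_congr rfl fun k hk => ?_
    have hkm : k ≤ m := Nat.lt_succ_iff.mp (mem_range.mp hk)
    simp only [g, Polynomial.coeff_coe, hsymPZ, ← hsymP_eq_coeff_hSeries]
    rw [if_neg (by omega)]
    congr 3
    omega
  -- `g k = 0` both for `k > m` (negative index of `h`) and for `k ≥ N` (degree of `ePolyExcept`)
  have hN : ∑ k : Fin N, g k = ∑ k ∈ range (m + 1 + N), g k := by
    rw [Fin.sum_univ_eq_sum_range g]
    refine sum_subset (range_subset_range.mpr (by omega)) fun k _ hk => ?_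
    have := natDegree_ePolyExcept_lt (X : Fin N → MvPolynomial (Fin N) ℂ) i
    simp only [Fintype.card_fin] at this
    rw [mem_range, not_lt] at hk
    simp only [g, Polynomial.coeff_eq_zero_of_natDegree_lt (this.trans_le hk), zero_mul]
  rw [hN, ← hm]
  refine sum_subset (range_subset_range.mpr (Nat.le_add_right (m + 1) N)) fun k _ hk => ?_
  simp only [mem_range, not_lt] at hk
  simp only [g, hsymPZ, if_pos (by omega : (m : ℤ) - k < 0), mul_zero]

theorem alternant_eq_det_mul_det (μ : Fin N → ℕ) :
    (alternant μ : MvPolynomial (Fin N) ℂ)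
      = (Matrix.of fun i k : Fin N => (ePolyExcept X i).coeff k).det
        * (Matrix.of fun k j : Fin N => hsymPZ N ((μ j : ℤ) - k)).det := by
  rw [alternant, ← Matrix.det_mul]
  congr 1
  ext i j
  simp [Matrix.mul_apply, X_pow_eq_sum_coeff_mul_hsymPZ]

theorem det_hsymPZ_add_staircase (lam : Fin N → ℕ) :
    (Matrix.of fun k j : Fin N => hsymPZ N (((lam j + (N - 1 - j) : ℕ) : ℤ) - k)).det
      = Equiv.Perm.sign (Fin.revPerm : Equiv.Perm (Fin N)) * schurP N lam := by
  rw [← Matrix.det_transpose, schurP, ← Matrix.det_permute']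
  refine congrArg Matrix.det (Matrix.ext fun j k => ?_)
  simp only [Matrix.transpose_apply, Matrix.of_apply, Matrix.submatrix_apply, id,
    Fin.revPerm_apply, Fin.val_rev]
  congr 1
  have := j.isLt
  have := k.isLt
  omega

theorem schurP_zero : schurP N 0 = 1 := by
  rw [schurP, Matrix.det_of_isUpperTriangular]
  · refine prod_eq_one fun i _ => ?_
    simp [hsymPZ_zero]
  · intro i j hij
    simp only [Matrix.of_apply, Pi.zero_apply, hsymPZ]
    rw [if_pos (by have : (j : ℕ) < i := hij; omega)]

theorem alternant_add_staircase (lam : Fin N → ℕ) :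
    (alternant (fun j : Fin N => lam j + (N - 1 - j)) : MvPolynomial (Fin N) ℂ)
      = alternant (fun j : Fin N => N - 1 - j) * schurP N lam := by
  have h0 := det_hsymPZ_add_staircase (0 : Fin N → ℕ)
  simp only [Pi.zero_apply, zero_add, schurP_zero, mul_one] at h0
  rw [alternant_eq_det_mul_det, alternant_eq_det_mul_det, det_hsymPZ_add_staircase, h0,
    mul_assoc]

theorem alternant_staircase :
    (alternant (fun j : Fin N => N - 1 - j) : MvPolynomial (Fin N) ℂ) = vandP N := by
  have hrev : (Matrix.of fun i j : Fin N => (X i : MvPolynomial (Fin N) ℂ) ^ (N - 1 - j)).submatrix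
      Fin.revPerm Fin.revPerm = Matrix.vandermonde fun i => X (Fin.rev i) := by
    refine Matrix.ext fun i j => ?_
    simp only [Matrix.submatrix_apply, Matrix.of_apply, Matrix.vandermonde_apply,
      Fin.revPerm_apply, Fin.val_rev]
    congr 1
    omega
  rw [alternant, ← Matrix.det_submatrix_equiv_self Fin.revPerm, hrev, Matrix.det_vandermonde,
    vandP, prod_filter, Fintype.prod_prod_type, prod_comm]
  refine Fintype.prod_equiv Fin.revPerm _ _ fun j => ?_
  rw [← Equiv.prod_comp Fin.revPerm, ← prod_filter]
  simp [Fin.rev_lt_rev, Finset.filter_lt_eq_Ioi]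

theorem vandP_mul_schurP (lam : Fin N → ℕ) :
    vandP N * schurP N lam = alternant fun j : Fin N => lam j + (N - 1 - j) := by
  rw [alternant_add_staircase, alternant_staircase]

end Bialternant

theorem schur_eigenfunction_of_Dk_general
    (N k : ℕ) (lam : Fin N → ℕ) :
    ∑ j : Fin N, (eulerOp N j)^[k] (vandP N * schurP N lam)
      = C ((∑ i : Fin N, ((lam i + (N - 1 - (i : ℕ)))^k : ℕ) : ℂ)) *
          (vandP N * schurP N lam) := by
  have h := Module.End.mem_eigenspace_iff.mp
    (alternant_mem_eigenspace (R := ℂ) k fun i : Fin N => lam i + (N - 1 - (i : ℕ)))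
  have heuler : ∀ j, eulerOp N j = euler j := fun j => rfl
  rw [vandP_mul_schurP, ← smul_eq_C_mul]
  simp only [heuler, ← Module.End.coe_pow, Nat.cast_pow]
  rwa [LinearMap.sum_apply] at h

/-- the operator `D_k f = V⁻¹ (Σ_j (u_j ∂/∂u_j)^k)(V f)` has the Schur
polynomials as eigenfunctions with eigenvalue `Σ_i (λ_i + N − i)^k`; equivalently
(multiplying through by the Vandermonde `V`),
`(Σ_j (u_j ∂/∂u_j)^k)(V · s_λ) = (Σ_i (λ_i + N − i)^k) · (V · s_λ)`. -/
theorem schur_eigenfunction_of_Dk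
    (N k : ℕ) (lam : Fin N → ℕ) (hlam : Antitone lam) :
    ∑ j : Fin N, (eulerOp N j)^[k] (vandP N * schurP N lam)
      = C ((∑ i : Fin N, ((lam i + (N - 1 - (i : ℕ)))^k : ℕ) : ℂ)) *
          (vandP N * schurP N lam) :=
  schur_eigenfunction_of_Dk_general N k lam
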